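/- Let λ > 0 and μ > 0 be real numbers with λ ≠ μ and λ ≠ 2μ. Then the function u₀(t,x) = x·t^μ/(μ−λ) + t^{2μ}/((μ−λ)²·(2μ−λ)) satisfies t·∂u₀/∂t = x·t^μ + λ·u₀ + (∂u₀/∂x)² for all t > 0 and x ∈ ℂ. Moreover, in the case λ = 2μ the function u₀(t,x) = x·t^μ/(μ−λ) + t^{2μ}·(log t)/(μ−λ)² and in the case λ = μ the function u₀(t,x) = x·t^μ·(log t) + t^{2μ}·(log t)²/μ − 2·t^{2μ}·(log t)/μ² + 2·t^{2μ}/μ³ satisfy the same equation t·∂u/∂t = x·t^μ + λ·u + (∂u/∂x)² for all t > 0 and x ∈ ℂ. -/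

import Mathlib

open Set Filter Topology Complex

noncomputable section

/-- `u` solves `t ∂u/∂t = x t^μ + λ u + (∂u/∂x)²` for all `t > 0`, `x ∈ ℂ`. -/
def SolvesExample (lam mu : ℝ) (u : ℝ → ℂ → ℂ) : Prop :=
  ∀ t : ℝ, 0 < t → ∀ x : ℂ,
    HasDerivAt (fun s : ℝ => u s x)
      ((x * ((t ^ mu : ℝ) : ℂ) + (lam : ℂ) * u t x + (deriv (u t) x) ^ 2) / (t : ℂ)) t

/-- `u₀` in the case `λ ≠ μ, 2μ`. -/
def uGeneric (lam mu : ℝ) : ℝ → ℂ → ℂ := fun t x =>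
  x * ((t ^ mu : ℝ) : ℂ) / ((mu : ℂ) - (lam : ℂ)) +
    ((t ^ (2 * mu) : ℝ) : ℂ) / (((mu : ℂ) - (lam : ℂ)) ^ 2 * (2 * (mu : ℂ) - (lam : ℂ)))

/-- `u₀` in the case `λ = 2μ`. -/
def uDouble (lam mu : ℝ) : ℝ → ℂ → ℂ := fun t x =>
  x * ((t ^ mu : ℝ) : ℂ) / ((mu : ℂ) - (lam : ℂ)) +
    ((t ^ (2 * mu) : ℝ) : ℂ) * ((Real.log t : ℝ) : ℂ) / ((mu : ℂ) - (lam : ℂ)) ^ 2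

/-- `u₀` in the case `λ = μ`. -/
def uEqual (mu : ℝ) : ℝ → ℂ → ℂ := fun t x =>
  x * ((t ^ mu : ℝ) : ℂ) * ((Real.log t : ℝ) : ℂ) +
    ((t ^ (2 * mu) : ℝ) : ℂ) * ((Real.log t : ℝ) : ℂ) ^ 2 / (mu : ℂ) -
    2 * ((t ^ (2 * mu) : ℝ) : ℂ) * ((Real.log t : ℝ) : ℂ) / ((mu : ℂ)) ^ 2 +
    2 * ((t ^ (2 * mu) : ℝ) : ℂ) / ((mu : ℂ)) ^ 3

/-!
The ansatz `u t x = x * a t + b t` makes `∂u/∂x = a t`, so the equation splits into the Euler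
equations `t a' = t^μ + λ a` and `t b' = λ b + a²`. With `P = t^μ`, `L = log t` one has
`t P' = μ P`, `t L' = 1`, and each `u₀` is an explicit solution of this system; the logarithms
appear in the resonant cases `λ = μ` (for `a`) and `λ = 2μ` (for `b`).
-/

lemma hasDerivAt_ofReal_rpow (mu : ℝ) {t : ℝ} (ht : 0 < t) :
    HasDerivAt (fun s : ℝ => ((s ^ mu : ℝ) : ℂ)) (mu * ((t ^ mu : ℝ) : ℂ) / t) t := by
  refine (Real.hasDerivAt_rpow_const (Or.inl ht.ne')).ofReal_comp.congr_deriv ?_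
  rw [Real.rpow_sub_one ht.ne']
  push_cast
  ring

lemma hasDerivAt_ofReal_log {t : ℝ} (ht : t ≠ 0) :
    HasDerivAt (fun s : ℝ => ((Real.log s : ℝ) : ℂ)) (1 / t) t := by
  simpa using (Real.hasDerivAt_log ht).ofReal_comp

lemma ofReal_rpow_two_mul (mu : ℝ) {t : ℝ} (ht : 0 ≤ t) :
    ((t ^ (2 * mu) : ℝ) : ℂ) = ((t ^ mu : ℝ) : ℂ) ^ 2 := by
  rw [mul_comm, Real.rpow_mul ht, Real.rpow_two]
  push_cast
  rfl

theorem solvesExample_of_affine {lam mu : ℝ} {u : ℝ → ℂ → ℂ} (a b : ℝ → ℂ)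
    (hu : ∀ t x, u t x = x * a t + b t)
    (ha : ∀ t, 0 < t → HasDerivAt a ((((t ^ mu : ℝ) : ℂ) + lam * a t) / t) t)
    (hb : ∀ t, 0 < t → HasDerivAt b ((lam * b t + a t ^ 2) / t) t) :
    SolvesExample lam mu u := by
  intro t ht x
  have hux : deriv (u t) x = a t := by
    rw [show u t = fun y => y * a t + b t from funext (hu t)]
    exact (((hasDerivAt_id x).mul_const (a t)).add_const (b t)).deriv.trans (one_mul _)
  rw [hux, hu, show (fun s => u s x) = fun s => x * a s + b s from funext (hu · x)]
  refine (((ha t ht).const_mul x).add (hb t ht)).congr_deriv ?_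
  ring

section

variable {lam mu : ℝ}

lemma hasDerivAt_rpow_div_sub (hlm : lam ≠ mu) {t : ℝ} (ht : 0 < t) :
    HasDerivAt (fun s : ℝ => ((s ^ mu : ℝ) : ℂ) / (mu - lam))
      ((((t ^ mu : ℝ) : ℂ) + lam * (((t ^ mu : ℝ) : ℂ) / (mu - lam))) / t) t := by
  have hc : (mu : ℂ) - lam ≠ 0 := sub_ne_zero.2 (by exact_mod_cast hlm.symm)
  refine ((hasDerivAt_ofReal_rpow mu ht).div_const _).congr_deriv ?_
  field_simp
  ring

theorem solvesExample_uGeneric (hlm : lam ≠ mu) (hl2m : lam ≠ 2 * mu) :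
    SolvesExample lam mu (uGeneric lam mu) := by
  have hc : (mu : ℂ) - lam ≠ 0 := sub_ne_zero.2 (by exact_mod_cast hlm.symm)
  have hd : 2 * (mu : ℂ) - lam ≠ 0 := sub_ne_zero.2 (by exact_mod_cast hl2m.symm)
  refine solvesExample_of_affine (fun t => ((t ^ mu : ℝ) : ℂ) / (mu - lam))
    (fun t => ((t ^ (2 * mu) : ℝ) : ℂ) / ((mu - lam) ^ 2 * (2 * mu - lam)))
    (fun t x => by simp only [uGeneric]; ring) (fun t ht => hasDerivAt_rpow_div_sub hlm ht)
    (fun t ht => ?_)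
  refine ((hasDerivAt_ofReal_rpow (2 * mu) ht).div_const _).congr_deriv ?_
  rw [ofReal_rpow_two_mul mu ht.le]
  push_cast
  field_simp
  ring

theorem solvesExample_uDouble (hmu : mu ≠ 0) (hl2m : lam = 2 * mu) :
    SolvesExample lam mu (uDouble lam mu) := by
  have hlm : lam ≠ mu := by rw [hl2m]; contrapose! hmu; linarith
  have hc : (mu : ℂ) - lam ≠ 0 := sub_ne_zero.2 (by exact_mod_cast hlm.symm)
  refine solvesExample_of_affine (fun t => ((t ^ mu : ℝ) : ℂ) / (mu - lam))
    (fun t => ((t ^ (2 * mu) : ℝ) : ℂ) * ((Real.log t : ℝ) : ℂ) / (mu - lam) ^ 2)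
    (fun t x => by simp only [uDouble]; ring) (fun t ht => hasDerivAt_rpow_div_sub hlm ht)
    (fun t ht => ?_)
  refine (((hasDerivAt_ofReal_rpow (2 * mu) ht).mul
    (hasDerivAt_ofReal_log ht.ne')).div_const _).congr_deriv ?_
  have ht' : (t : ℂ) ≠ 0 := by exact_mod_cast ht.ne'
  rw [ofReal_rpow_two_mul mu ht.le, hl2m]
  push_cast
  field_simp

theorem solvesExample_uEqual (hmu : mu ≠ 0) : SolvesExample mu mu (uEqual mu) := by
  have hmu' : (mu : ℂ) ≠ 0 := by exact_mod_cast hmu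
  refine solvesExample_of_affine (fun t => ((t ^ mu : ℝ) : ℂ) * ((Real.log t : ℝ) : ℂ))
    (fun t => ((t ^ (2 * mu) : ℝ) : ℂ) * ((Real.log t : ℝ) : ℂ) ^ 2 / mu -
      2 * ((t ^ (2 * mu) : ℝ) : ℂ) * ((Real.log t : ℝ) : ℂ) / mu ^ 2 +
      2 * ((t ^ (2 * mu) : ℝ) : ℂ) / mu ^ 3)
    (fun t x => by simp only [uEqual]; ring) (fun t ht => ?_) (fun t ht => ?_)
  · have ht' : (t : ℂ) ≠ 0 := by exact_mod_cast ht.ne'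
    refine ((hasDerivAt_ofReal_rpow mu ht).mul (hasDerivAt_ofReal_log ht.ne')).congr_deriv ?_
    field_simp
    ring
  · have ht' : (t : ℂ) ≠ 0 := by exact_mod_cast ht.ne'
    have hP := hasDerivAt_ofReal_rpow (2 * mu) ht
    have hL := hasDerivAt_ofReal_log ht.ne'
    refine ((((hP.mul (hL.pow 2)).div_const _).sub (((hP.const_mul 2).mul hL).div_const _)).add
      ((hP.const_mul 2).div_const _)).congr_deriv ?_
    rw [ofReal_rpow_two_mul mu ht.le, Pi.pow_apply]
    push_cast
    field_simp
    ring

end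

theorem statement18_general (lam mu : ℝ) (hmu : 0 < mu) :
    (lam ≠ mu → lam ≠ 2 * mu → SolvesExample lam mu (uGeneric lam mu)) ∧
    (lam = 2 * mu → SolvesExample lam mu (uDouble lam mu)) ∧
    (lam = mu → SolvesExample lam mu (uEqual mu)) :=
  ⟨solvesExample_uGeneric, solvesExample_uDouble hmu.ne',
    fun h => by rw [h]; exact solvesExample_uEqual hmu.ne'⟩

/-- Example 2.5 (1): the explicit particular solutions `u₀` of
`t ∂u/∂t = x t^μ + λ u + (∂u/∂x)²` in the three cases `λ ≠ μ, 2μ`, `λ = 2μ`, `λ = μ`. -/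
theorem statement18 (lam mu : ℝ) (hlam : 0 < lam) (hmu : 0 < mu) :
    (lam ≠ mu → lam ≠ 2 * mu → SolvesExample lam mu (uGeneric lam mu)) ∧
    (lam = 2 * mu → SolvesExample lam mu (uDouble lam mu)) ∧
    (lam = mu → SolvesExample lam mu (uEqual mu)) :=
  statement18_general lam mu hmu
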